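/- arXiv:1307.1773 — 4 statements merged into one kernel-verified Lean document; each statement's English description precedes it below -/
import Mathlib

section
/- For all integers m ≥ 1, m' ≥ 1 and w ≥ 0, w' ≥ 0, the rational number λ := m'(mw+2)/(m(w+2)) + m(m'w'+2)/(m'(w'+2)) − 2 satisfies λ ≥ 0. Moreover, λ = 0 if and only if m = m' = 1, or (m = m' and w = w' = 0). -/
/-- The coefficient `λ = m'(mw+2)/(m(w+2)) + m(m'w'+2)/(m'(w'+2)) − 2` attached to an
ordered pair of invariant pairs `((m,w),(m',w'))`. -/
def lamCoeff (m w m' w' : ℤ) : ℚ :=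
  ((m' : ℚ) * ((m : ℚ) * (w : ℚ) + 2)) / ((m : ℚ) * ((w : ℚ) + 2))
    + ((m : ℚ) * ((m' : ℚ) * (w' : ℚ) + 2)) / ((m' : ℚ) * ((w' : ℚ) + 2)) - 2

private lemma lam_key (a u b v : ℚ) (ha1 : 1 ≤ a) (hb1 : 1 ≤ b)
    (hu0 : 0 ≤ u) (hv0 : 0 ≤ v) :
    0 ≤ b * (a * u + 2) / (a * (u + 2)) + a * (b * v + 2) / (b * (v + 2)) - 2 ∧
      (b * (a * u + 2) / (a * (u + 2)) + a * (b * v + 2) / (b * (v + 2)) - 2 = 0 ↔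
        (a = 1 ∧ b = 1) ∨ (a = b ∧ u = 0 ∧ v = 0)) := by
  have ha0 : (0 : ℚ) < a := by linarith
  have hb0 : (0 : ℚ) < b := by linarith
  have hu2 : (0 : ℚ) < u + 2 := by linarith
  have hv2 : (0 : ℚ) < v + 2 := by linarith
  have hD : (0 : ℚ) < a * b * (u + 2) * (v + 2) := by positivity
  have hND : b * (a * u + 2) / (a * (u + 2)) + a * (b * v + 2) / (b * (v + 2)) - 2 =
      (a * b * u * v * (a + b - 2) + 2 * u * a * ((b - 1) ^ 2 + (a - 1))
        + 2 * v * b * ((a - 1) ^ 2 + (b - 1)) + 4 * (a - b) ^ 2)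
        / (a * b * (u + 2) * (v + 2)) := by
    field_simp
    ring
  have t1 : (0 : ℚ) ≤ a * b * u * v * (a + b - 2) := by
    have h2 : (0 : ℚ) ≤ a + b - 2 := by linarith
    have h1 : (0 : ℚ) ≤ a * b * u * v := by positivity
    exact mul_nonneg h1 h2
  have t2 : (0 : ℚ) ≤ 2 * u * a * ((b - 1) ^ 2 + (a - 1)) := by
    have h2 : (0 : ℚ) ≤ (b - 1) ^ 2 + (a - 1) := by nlinarith [sq_nonneg (b - 1)]
    have h1 : (0 : ℚ) ≤ 2 * u * a := by positivity
    exact mul_nonneg h1 h2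
  have t3 : (0 : ℚ) ≤ 2 * v * b * ((a - 1) ^ 2 + (b - 1)) := by
    have h2 : (0 : ℚ) ≤ (a - 1) ^ 2 + (b - 1) := by nlinarith [sq_nonneg (a - 1)]
    have h1 : (0 : ℚ) ≤ 2 * v * b := by positivity
    exact mul_nonneg h1 h2
  have t4 : (0 : ℚ) ≤ 4 * (a - b) ^ 2 := by positivity
  have hN : (0 : ℚ) ≤ a * b * u * v * (a + b - 2) + 2 * u * a * ((b - 1) ^ 2 + (a - 1))
        + 2 * v * b * ((a - 1) ^ 2 + (b - 1)) + 4 * (a - b) ^ 2 := by linarith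
  refine ⟨by rw [hND]; exact div_nonneg hN hD.le, ?_, ?_⟩
  · intro h0
    rw [hND, div_eq_zero_iff] at h0
    have hN0 : a * b * u * v * (a + b - 2) + 2 * u * a * ((b - 1) ^ 2 + (a - 1))
        + 2 * v * b * ((a - 1) ^ 2 + (b - 1)) + 4 * (a - b) ^ 2 = 0 := by
      rcases h0 with h | h
      · exact h
      · exact absurd h hD.ne'
    have hab : a = b := by
      have h4 : (a - b) ^ 2 = 0 := by nlinarith
      have := pow_eq_zero_iff (n := 2) (by norm_num) |>.mp h4
      linarith
    rcases eq_or_lt_of_le ha1 with hA1 | hA2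
    · exact Or.inl ⟨hA1.symm, hab ▸ hA1.symm⟩
    · refine Or.inr ⟨hab, ?_, ?_⟩
      · by_contra hne
        have hupos : 0 < u := lt_of_le_of_ne hu0 (Ne.symm hne)
        have : 0 < 2 * u * a * ((b - 1) ^ 2 + (a - 1)) := by
          apply mul_pos (by positivity)
          nlinarith [sq_nonneg (b - 1)]
        linarith
      · have hB2 : 1 < b := hab ▸ hA2
        by_contra hne
        have hvpos : 0 < v := lt_of_le_of_ne hv0 (Ne.symm hne)
        have : 0 < 2 * v * b * ((a - 1) ^ 2 + (b - 1)) := by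
          apply mul_pos (by positivity)
          nlinarith [sq_nonneg (a - 1)]
        linarith
  · rintro (⟨h1, h2⟩ | ⟨h1, h2, h3⟩)
    · subst h1; subst h2
      rw [hND]; norm_num
    · subst h1; subst h2; subst h3
      rw [hND]; ring_nf

theorem lamCoeff_nonneg_and_eq_zero_iff (m m' w w' : ℤ)
    (hm : 1 ≤ m) (hm' : 1 ≤ m') (hw : 0 ≤ w) (hw' : 0 ≤ w') :
    0 ≤ lamCoeff m w m' w' ∧
      (lamCoeff m w m' w' = 0 ↔ (m = 1 ∧ m' = 1) ∨ (m = m' ∧ w = 0 ∧ w' = 0)) := by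
  have ha1 : (1 : ℚ) ≤ (m : ℚ) := by exact_mod_cast hm
  have hb1 : (1 : ℚ) ≤ (m' : ℚ) := by exact_mod_cast hm'
  have hu0 : (0 : ℚ) ≤ (w : ℚ) := by exact_mod_cast hw
  have hv0 : (0 : ℚ) ≤ (w' : ℚ) := by exact_mod_cast hw'
  obtain ⟨h1, h2⟩ := lam_key (m : ℚ) (w : ℚ) (m' : ℚ) (w' : ℚ) ha1 hb1 hu0 hv0
  rw [lamCoeff]
  refine ⟨h1, h2.trans ?_⟩
  constructor
  · rintro (⟨x1, x2⟩ | ⟨x1, x2, x3⟩)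
    · exact Or.inl ⟨by exact_mod_cast x1, by exact_mod_cast x2⟩
    · exact Or.inr ⟨by exact_mod_cast x1, by exact_mod_cast x2, by exact_mod_cast x3⟩
  · rintro (⟨x1, x2⟩ | ⟨x1, x2, x3⟩)
    · exact Or.inl ⟨by exact_mod_cast x1, by exact_mod_cast x2⟩
    · exact Or.inr ⟨by exact_mod_cast x1, by exact_mod_cast x2, by exact_mod_cast x3⟩
end

section
/- Let G be a connected finite simple graph on a vertex set V, and let M ⊆ V be a subset with #M = N. Write t' := (#edges of G) − #V + 1 for the first Betti number of G. Assume that every connected component K of the induced subgraph of G on V ∖ M satisfies #{(x,m) : x ∈ K, m ∈ M, x adjacent to m in G} ≥ 2, i.e., each component of G − M has at least two edges to M. Then the number of connected components of the induced subgraph of G on V ∖ M is at most N − 1 + t'. -/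
/-!
Write `S = V ∖ M` and `c` for the number of components of `G[S]`. Every graph satisfies
`#vertices ≤ #edges + #components`, so `#S ≤ e(G[S]) + c`. Each component of `G[S]` sends at
least two edges to `M`, so there are at least `2c` edges between `S` and `M`, and these are
disjoint from the edges of `G[S]`. Hence `c + #S ≤ c + e(G[S]) + c ≤ e(G)`, i.e.
`c ≤ e(G) - #V + N`.
-/

theorem Nat.mul_card_le_card_of_le_card_fiber {α β : Type*} [Finite α] [Finite β]
    (f : α → β) (n : ℕ) (h : ∀ b, n ≤ Nat.card {a // f a = b}) : n * Nat.card β ≤ Nat.card α := by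
  have := Fintype.ofFinite β
  rw [← Nat.card_congr (Equiv.sigmaFiberEquiv f), Nat.card_sigma, Nat.card_eq_fintype_card,
    mul_comm, ← smul_eq_mul, ← Finset.card_univ, ← Finset.sum_const]
  exact Finset.sum_le_sum fun b _ => h b

namespace SimpleGraph

variable {V : Type*} {G : SimpleGraph V}

theorem Reachable.reachable_deleteEdges_or {x y : V} (h : G.Reachable x y) (u v : V) :
    (G.deleteEdges {s(u, v)}).Reachable x y ∨ (G.deleteEdges {s(u, v)}).Reachable x u ∨
      (G.deleteEdges {s(u, v)}).Reachable x v := by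
  obtain ⟨p⟩ := h
  induction p with
  | nil => exact Or.inl .rfl
  | @cons a b c hab p ih =>
    by_cases he : s(a, b) = s(u, v)
    · rcases Sym2.eq_iff.mp he with ⟨rfl, -⟩ | ⟨rfl, -⟩
      · exact Or.inr (Or.inl .rfl)
      · exact Or.inr (Or.inr .rfl)
    · have hab' : (G.deleteEdges {s(u, v)}).Adj a b := by simpa [hab] using he
      exact ih.imp hab'.reachable.trans (Or.imp hab'.reachable.trans hab'.reachable.trans)

theorem Reachable.deleteEdges_of_not_reachable {x y u v : V} (h : G.Reachable x y)
    (hx : ¬(G.deleteEdges {s(u, v)}).Reachable x v)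
    (hy : ¬(G.deleteEdges {s(u, v)}).Reachable y v) :
    (G.deleteEdges {s(u, v)}).Reachable x y := by
  rcases h.reachable_deleteEdges_or u v with hxy | hxu | hxv
  · exact hxy
  · rcases h.symm.reachable_deleteEdges_or u v with hyx | hyu | hyv
    · exact hyx.symm
    · exact hxu.trans hyu.symm
    · exact absurd hyv hy
  · exact absurd hxv hx

theorem card_connectedComponent_deleteEdges_le [Finite V] (u v : V) :
    Nat.card (G.deleteEdges {s(u, v)}).ConnectedComponent
      ≤ Nat.card G.ConnectedComponent + 1 := by
  classical
  set G' := G.deleteEdges {s(u, v)}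
  let φ : G'.ConnectedComponent → Option G.ConnectedComponent := fun c =>
    if c = G'.connectedComponentMk v then none
    else some (c.map (Hom.ofLE (G.deleteEdges_le {s(u, v)})))
  have hφ : Function.Injective φ := by
    intro c₁ c₂
    induction c₁ using ConnectedComponent.ind with | h x => ?_
    induction c₂ using ConnectedComponent.ind with | h y => ?_
    by_cases hx : G'.Reachable x v <;> by_cases hy : G'.Reachable y v <;>
      simp only [φ, hx, hy, ConnectedComponent.eq, ↓reduceIte, reduceCtorEq, Option.some.injEq,
        IsEmpty.forall_iff, forall_const]
    · exact hx.trans hy.symm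
    · rw [ConnectedComponent.map_mk, ConnectedComponent.map_mk, ConnectedComponent.eq]
      exact fun hxy => hxy.deleteEdges_of_not_reachable hx hy
  simpa using Nat.card_le_card_of_injective φ hφ

theorem card_le_card_edgeSet_add_card_connectedComponent [Finite V] (G : SimpleGraph V) :
    Nat.card V ≤ Nat.card G.edgeSet + Nat.card G.ConnectedComponent := by
  generalize hn : Nat.card G.edgeSet = n
  induction n generalizing G with
  | zero =>
    have hG : G = ⊥ :=
      edgeSet_eq_empty.mp (Set.isEmpty_coe_sort.mp (Finite.card_eq_zero_iff.mp hn))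
    subst hG
    refine (Nat.card_le_card_of_injective (⊥ : SimpleGraph V).connectedComponentMk
      fun x y hxy => ?_).trans (Nat.le_add_left _ _)
    exact reachable_bot.mp (ConnectedComponent.exact hxy)
  | succ n ih =>
    obtain ⟨e, he⟩ : G.edgeSet.Nonempty := Set.nonempty_of_ncard_ne_zero (by
      rw [← Nat.card_coe_set_eq, hn]; exact n.succ_ne_zero)
    induction e using Sym2.ind with | h u v => ?_
    have hcard : Nat.card (G.deleteEdges {s(u, v)}).edgeSet = n := by
      rw [edgeSet_deleteEdges, Nat.card_coe_set_eq, Set.ncard_sdiff_singleton_of_mem he,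
        ← Nat.card_coe_set_eq, hn, Nat.add_sub_cancel]
    have := ih _ hcard
    have := card_connectedComponent_deleteEdges_le (G := G) u v
    omega

theorem card_edgeSet_induce_add_card_le_card_edgeSet [Finite V] (S : Set V) :
    Nat.card (G.induce S).edgeSet + Nat.card {q : S × V // q.2 ∉ S ∧ G.Adj q.1 q.2}
      ≤ Nat.card G.edgeSet := by
  let inner := (Embedding.induce (G := G) S).mapEdgeSet
  let cross : {q : S × V // q.2 ∉ S ∧ G.Adj q.1 q.2} → G.edgeSet :=
    fun q => ⟨s(q.1.1, q.1.2), q.2.2⟩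
  have hcross : Function.Injective cross := by
    rintro ⟨⟨x, a⟩, ha, _⟩ ⟨⟨y, b⟩, _, _⟩ h
    have hs : s((x : V), a) = s((y : V), b) := congrArg Subtype.val h
    rcases Sym2.eq_iff.mp hs with ⟨hxy, rfl⟩ | ⟨-, rfl⟩
    · obtain rfl := Subtype.ext hxy
      rfl
    · exact absurd y.2 ha
  have hdisj : ∀ e q, inner e ≠ cross q := by
    rintro ⟨e, _⟩ ⟨⟨x, a⟩, ha, _⟩ h
    have : a ∈ Sym2.map Subtype.val e := by simpa [inner, cross] using congrArg (a ∈ ·.1) h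
    obtain ⟨b, -, rfl⟩ := Sym2.mem_map.mp this
    exact ha b.2
  simpa using Nat.card_le_card_of_injective _ (inner.injective.sumElim hcross hdisj)

theorem card_connectedComponent_induce_add_card_le_card_edgeSet [Finite V] (S : Set V)
    (h : ∀ c : (G.induce S).ConnectedComponent, 2 ≤ Nat.card {q : S × V //
      q.2 ∉ S ∧ G.Adj q.1 q.2 ∧ (G.induce S).connectedComponentMk q.1 = c}) :
    Nat.card (G.induce S).ConnectedComponent + Nat.card S ≤ Nat.card G.edgeSet := by
  have hT : 2 * Nat.card (G.induce S).ConnectedComponent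
      ≤ Nat.card {q : S × V // q.2 ∉ S ∧ G.Adj q.1 q.2} := by
    refine Nat.mul_card_le_card_of_le_card_fiber (fun q => (G.induce S).connectedComponentMk q.1.1)
      2 fun c => (h c).trans_eq (Nat.card_congr ?_)
    exact ((Equiv.subtypeSubtypeEquivSubtypeInter _ _).trans
      (Equiv.subtypeEquivRight fun _ => and_assoc)).symm
  have := card_le_card_edgeSet_add_card_connectedComponent (G.induce S)
  have := card_edgeSet_induce_add_card_le_card_edgeSet (G := G) S
  omega

end SimpleGraph

theorem chains_bound_general {V : Type*} [Fintype V]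
    (G : SimpleGraph V) [DecidableRel G.Adj]
    (M : Finset V) (N : ℕ) (hN : M.card = N)
    (hK : ∀ c : (G.induce ((↑M : Set V)ᶜ)).ConnectedComponent,
      2 ≤ Nat.card {q : ((↑M : Set V)ᶜ : Set V) × V //
            q.2 ∈ M ∧ G.Adj (↑q.1) q.2 ∧
              (G.induce ((↑M : Set V)ᶜ)).connectedComponentMk q.1 = c}) :
    (Nat.card (G.induce ((↑M : Set V)ᶜ)).ConnectedComponent : ℤ)
      ≤ (N : ℤ) - 1 + ((G.edgeFinset.card : ℤ) - (Fintype.card V : ℤ) + 1) := by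
  have hcomp := G.card_connectedComponent_induce_add_card_le_card_edgeSet (↑M : Set V)ᶜ
    fun c => (hK c).trans_eq (Nat.card_congr (Equiv.subtypeEquivRight fun q => by simp))
  have hS : Nat.card ((↑M : Set V)ᶜ : Set V) + N = Fintype.card V := by
    rw [← hN, ← Set.ncard_coe_finset, Nat.card_coe_set_eq, add_comm, Set.ncard_add_ncard_compl,
      Nat.card_eq_fintype_card]
  rw [SimpleGraph.edgeFinset_card, ← Nat.card_eq_fintype_card]
  omega

theorem chains_bound {V : Type*} [Fintype V] [DecidableEq V]
    (G : SimpleGraph V) [DecidableRel G.Adj] (hconn : G.Connected)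
    (M : Finset V) (N : ℕ) (hN : M.card = N)
    (hK : ∀ c : (G.induce ((↑M : Set V)ᶜ)).ConnectedComponent,
      2 ≤ Nat.card {q : ((↑M : Set V)ᶜ : Set V) × V //
            q.2 ∈ M ∧ G.Adj (↑q.1) q.2 ∧
              (G.induce ((↑M : Set V)ᶜ)).connectedComponentMk q.1 = c}) :
    (Nat.card (G.induce ((↑M : Set V)ᶜ)).ConnectedComponent : ℤ)
      ≤ (N : ℤ) - 1 + ((G.edgeFinset.card : ℤ) - (Fintype.card V : ℤ) + 1) :=
  chains_bound_general G M N hN hK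
end

section
/- Let g, r, e, p, q be integers with g ≥ 2, r ≥ 0, e ≥ 1, p ≥ e + 2 and q ≥ 0, and set μ := (p−1)/(p−e−1) ∈ ℚ. Then, in ℚ, (5q+2)(g−1) + 3q + 2r + e·⌊2r/(p−e−1)⌋ + (2g−3)·(2r + 4 + e·⌊2(r+2)/(p−e−1)⌋) + g·max{0, 2r + 4 + e·⌊2(r+2)/(p−e−1)⌋ − 3q} ≤ (g−1)(2 + 2q + 4μ(r+3)) + g·max{3q − 4μ, 2μr}. -/
theorem local_bound_first_inequality (g r e p q : ℤ)
    (hg : 2 ≤ g) (hr : 0 ≤ r) (he : 1 ≤ e) (hp : e + 2 ≤ p) (hq : 0 ≤ q)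
    (μ : ℚ) (hμ : μ = ((p : ℚ) - 1) / ((p : ℚ) - (e : ℚ) - 1)) :
    (5 * (q : ℚ) + 2) * ((g : ℚ) - 1) + 3 * (q : ℚ) + 2 * (r : ℚ)
        + (e : ℚ) * ((⌊(2 * (r : ℚ)) / ((p : ℚ) - (e : ℚ) - 1)⌋ : ℤ) : ℚ)
        + (2 * (g : ℚ) - 3) * (2 * (r : ℚ) + 4
            + (e : ℚ) * ((⌊(2 * ((r : ℚ) + 2)) / ((p : ℚ) - (e : ℚ) - 1)⌋ : ℤ) : ℚ))
        + (g : ℚ) * max 0 (2 * (r : ℚ) + 4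
            + (e : ℚ) * ((⌊(2 * ((r : ℚ) + 2)) / ((p : ℚ) - (e : ℚ) - 1)⌋ : ℤ) : ℚ)
            - 3 * (q : ℚ))
      ≤ ((g : ℚ) - 1) * (2 + 2 * (q : ℚ) + 4 * μ * ((r : ℚ) + 3))
          + (g : ℚ) * max (3 * (q : ℚ) - 4 * μ) (2 * μ * (r : ℚ)) := by
  have hgQ : (2:ℚ) ≤ (g:ℚ) := by exact_mod_cast hg
  have hrQ : (0:ℚ) ≤ (r:ℚ) := by exact_mod_cast hr
  have heQ : (1:ℚ) ≤ (e:ℚ) := by exact_mod_cast he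
  have hpQ : (e:ℚ) + 2 ≤ (p:ℚ) := by exact_mod_cast hp
  set d : ℚ := (p:ℚ) - (e:ℚ) - 1 with hd_def
  have hd0 : 0 < d := by simp only [hd_def]; linarith
  have hμ1 : μ - 1 = (e:ℚ) / d := by
    rw [hμ]; field_simp; rw [hd_def]; ring
  have h1 : (e:ℚ) * ((⌊(2 * (r:ℚ)) / d⌋ : ℤ) : ℚ) ≤ 2 * (r:ℚ) * (μ - 1) := by
    have hf := Int.floor_le ((2 * (r:ℚ)) / d)
    have : (e:ℚ) * ((⌊(2 * (r:ℚ)) / d⌋ : ℤ) : ℚ) ≤ (e:ℚ) * ((2 * (r:ℚ)) / d) :=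
      mul_le_mul_of_nonneg_left hf (by linarith)
    have heq : (e:ℚ) * ((2 * (r:ℚ)) / d) = 2 * (r:ℚ) * (μ - 1) := by
      rw [hμ1]; field_simp
    linarith
  have h2 : (e:ℚ) * ((⌊(2 * ((r:ℚ) + 2)) / d⌋ : ℤ) : ℚ) ≤ 2 * ((r:ℚ) + 2) * (μ - 1) := by
    have hf := Int.floor_le ((2 * ((r:ℚ) + 2)) / d)
    have : (e:ℚ) * ((⌊(2 * ((r:ℚ) + 2)) / d⌋ : ℤ) : ℚ) ≤ (e:ℚ) * ((2 * ((r:ℚ) + 2)) / d) :=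
      mul_le_mul_of_nonneg_left hf (by linarith)
    have heq : (e:ℚ) * ((2 * ((r:ℚ) + 2)) / d) = 2 * ((r:ℚ) + 2) * (μ - 1) := by
      rw [hμ1]; field_simp
    linarith
  set F2 : ℚ := ((⌊(2 * ((r:ℚ) + 2)) / d⌋ : ℤ) : ℚ) with hF2
  have hA : 2 * (r:ℚ) + 4 + (e:ℚ) * F2 ≤ 2 * μ * ((r:ℚ) + 2) := by
    have heq : 2 * ((r:ℚ) + 2) * (μ - 1) = 2 * μ * ((r:ℚ) + 2) - (2 * (r:ℚ) + 4) := by ring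
    linarith [h2]
  have hmax1 : max (0:ℚ) (2 * (r:ℚ) + 4 + (e:ℚ) * F2 - 3 * (q:ℚ))
      ≤ max (0:ℚ) (2 * μ * ((r:ℚ) + 2) - 3 * (q:ℚ)) :=
    max_le_max le_rfl (by linarith)
  rcases le_total (3 * (q:ℚ)) (2 * μ * ((r:ℚ) + 2)) with h | h
  · have hm2 : max (3 * (q:ℚ) - 4 * μ) (2 * μ * (r:ℚ)) = 2 * μ * (r:ℚ) :=
      max_eq_right (by linarith)
    have hm1v : max (0:ℚ) (2 * μ * ((r:ℚ) + 2) - 3 * (q:ℚ))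
        = 2 * μ * ((r:ℚ) + 2) - 3 * (q:ℚ) := max_eq_right (by linarith)
    have hP1 : (2 * (g:ℚ) - 3) * (2 * (r:ℚ) + 4 + (e:ℚ) * F2)
        ≤ (2 * (g:ℚ) - 3) * (2 * μ * ((r:ℚ) + 2)) :=
      mul_le_mul_of_nonneg_left hA (by linarith)
    have hP2 : (g:ℚ) * max (0:ℚ) (2 * (r:ℚ) + 4 + (e:ℚ) * F2 - 3 * (q:ℚ))
        ≤ (g:ℚ) * (2 * μ * ((r:ℚ) + 2) - 3 * (q:ℚ)) :=
      mul_le_mul_of_nonneg_left (hmax1.trans hm1v.le) (by linarith)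
    rw [hm2]
    linarith [h1, hP1, hP2]
  · have hm2 : max (3 * (q:ℚ) - 4 * μ) (2 * μ * (r:ℚ)) = 3 * (q:ℚ) - 4 * μ :=
      max_eq_left (by linarith)
    have hm1v : max (0:ℚ) (2 * μ * ((r:ℚ) + 2) - 3 * (q:ℚ)) = 0 :=
      max_eq_left (by linarith)
    have hP1 : (2 * (g:ℚ) - 3) * (2 * (r:ℚ) + 4 + (e:ℚ) * F2)
        ≤ (2 * (g:ℚ) - 3) * (2 * μ * ((r:ℚ) + 2)) :=
      mul_le_mul_of_nonneg_left hA (by linarith)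
    have hP2 : (g:ℚ) * max (0:ℚ) (2 * (r:ℚ) + 4 + (e:ℚ) * F2 - 3 * (q:ℚ)) ≤ 0 :=
      mul_nonpos_of_nonneg_of_nonpos (by linarith) (by rw [hm1v] at hmax1; exact hmax1)
    rw [hm2]
    linarith [h1, hP1, hP2]
end

section
/- Let X be a set and n ≥ 1 an integer. For each 0 ≤ m ≤ n let Z_m ⊆ X^m be a subset, such that for every m < n one has Z_m = {x ∈ X^m : for every y ∈ X, the extended tuple (x_0, …, x_{m−1}, y) lies in Z_{m+1}}. Let d_1, …, d_n be natural numbers such that for every m < n and every x ∈ X^m with x ∉ Z_m, the set {y ∈ X : (x_0, …, x_{m−1}, y) ∈ Z_{m+1}} is finite of cardinality at most d_{m+1}. Set N := max{ n, max_{0 ≤ m ≤ n−1} (m + d_{m+1}) }. If the empty tuple does not lie in Z_0, then every finite subset S ⊆ X with #S > N contains n pairwise distinct elements P_0, …, P_{n−1} such that (P_0, …, P_{n−1}) ∉ Z_n. -/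
theorem induction_core {X : Type*} (n : ℕ) (hn : 1 ≤ n)
    (Z : ∀ m : ℕ, Set (Fin m → X))
    (hrec : ∀ m < n, Z m = {x | ∀ y : X, Fin.snoc x y ∈ Z (m + 1)})
    (d : ℕ → ℕ)
    (hd : ∀ m < n, ∀ x : Fin m → X, x ∉ Z m →
      {y : X | Fin.snoc x y ∈ Z (m + 1)}.Finite ∧
        {y : X | Fin.snoc x y ∈ Z (m + 1)}.ncard ≤ d (m + 1))
    (N : ℕ) (hN : N = max n ((Finset.range n).sup fun m => m + d (m + 1)))
    (h0 : (fun i : Fin 0 => i.elim0) ∉ Z 0)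
    (S : Finset X) (hS : N < S.card) :
    ∃ P : Fin n → X, Function.Injective P ∧ (∀ i, P i ∈ S) ∧ P ∉ Z n := by
  classical
  have key : ∀ m, m ≤ n → ∃ P : Fin m → X, Function.Injective P ∧ (∀ i, P i ∈ S) ∧ P ∉ Z m := by
    intro m
    induction m with
    | zero =>
      intro _
      refine ⟨fun i => i.elim0, fun i => i.elim0, fun i => i.elim0, ?_⟩
      exact h0
    | succ m ih =>
      intro hm
      have hmn : m < n := hm
      obtain ⟨P, hinj, hmem, hZ⟩ := ih hmn.le
      obtain ⟨hfin, hcard⟩ := hd m hmn P hZ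
      have hex : (S \ (Finset.image P Finset.univ ∪ hfin.toFinset)).Nonempty := by
        rw [← Finset.card_pos]
        have h1 : (Finset.image P Finset.univ ∪ hfin.toFinset).card ≤ m + d (m + 1) := by
          refine le_trans (Finset.card_union_le _ _) ?_
          have ha : (Finset.image P Finset.univ).card ≤ m := by
            refine le_trans Finset.card_image_le ?_
            simp
          have hb : hfin.toFinset.card ≤ d (m + 1) := by
            rwa [← Set.ncard_eq_toFinset_card _ hfin]
          omega
        have h2 : m + d (m + 1) ≤ N := by
          rw [hN]
          exact le_max_of_le_right (Finset.le_sup (f := fun m => m + d (m + 1)) (Finset.mem_range.mpr hmn))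
        have h3 := Finset.le_card_sdiff (Finset.image P Finset.univ ∪ hfin.toFinset) S
        omega
      obtain ⟨y, hy⟩ := hex
      rw [Finset.mem_sdiff, Finset.mem_union, not_or] at hy
      obtain ⟨hyS, hyP, hyB⟩ := hy
      have hyP' : ∀ k, y ≠ P k := by
        intro k hk
        exact hyP (Finset.mem_image.mpr ⟨k, Finset.mem_univ k, hk.symm⟩)
      refine ⟨Fin.snoc P y, ?_, ?_, ?_⟩
      · intro i j hij
        induction i using Fin.lastCases with
        | last =>
          induction j using Fin.lastCases with
          | last => rfl
          | cast j =>
            rw [Fin.snoc_last, Fin.snoc_castSucc] at hij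
            exact absurd hij (hyP' j)
        | cast i =>
          induction j using Fin.lastCases with
          | last =>
            rw [Fin.snoc_last, Fin.snoc_castSucc] at hij
            exact absurd hij.symm (hyP' i)
          | cast j =>
            rw [Fin.snoc_castSucc, Fin.snoc_castSucc] at hij
            exact congrArg Fin.castSucc (hinj hij)
      · intro i
        induction i using Fin.lastCases with
        | last => rw [Fin.snoc_last]; exact hyS
        | cast i => rw [Fin.snoc_castSucc]; exact hmem i
      · intro hmem'
        exact hyB (by simpa using hmem')
  obtain ⟨P, h1, h2, h3⟩ := key n le_rfl
  exact ⟨P, h1, h2, h3⟩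
end
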